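/- Let K(x,y) = min{x,y} be the Brownian motion kernel on [0,1], let w ≡ 1, and let X_N = {1/N, 2/N, …, 1}. Suppose f : [0,1] → ℝ is twice differentiable with bounded second derivative, f(0) = 0, and f(1) ≠ 0. Then the Bayesian quadrature standard score satisfies |I(f) − Q_{X_N}(f)| / R_BC(f,X_N) ≤ sup_{x ∈ [0,1]} |f''(x)| / (√12 · N · σ_ML(f,X_N)) ≲ N^{−1/2}. If furthermore there is c > 0 with f''(x) > c for all x ∈ [0,1], then also |I(f) − Q_{X_N}(f)| / R_BC(f,X_N) ≳ N^{−1/2}. -/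

import Mathlib

open MeasureTheory Filter Matrix Real Function
open scoped BigOperators Topology

noncomputable section

/-- The kernel matrix `(K_X)_{ij} = K(x_i, x_j)` for a kernel on `ℝ`. -/
def kernelMatrix1 (K : ℝ → ℝ → ℝ) {N : ℕ} (x : Fin N → ℝ) : Matrix (Fin N) (Fin N) ℝ :=
  Matrix.of fun i j => K (x i) (x j)

/-- The vector `(k_X(t))_i = K(t, x_i)`. -/
def kvec1 (K : ℝ → ℝ → ℝ) {N : ℕ} (x : Fin N → ℝ) (t : ℝ) : Fin N → ℝ :=
  fun i => K t (x i)

/-- The data vector `(f_X)_i = f(x_i)`. -/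
def fvec1 (f : ℝ → ℝ) {N : ℕ} (x : Fin N → ℝ) : Fin N → ℝ := fun i => f (x i)

/-- The GP conditional mean `s_{f,X}(t) = k_X(t)ᵀ K_X⁻¹ f_X`. -/
def condMean1 (K : ℝ → ℝ → ℝ) {N : ℕ} (x : Fin N → ℝ) (f : ℝ → ℝ) (t : ℝ) : ℝ :=
  kvec1 K x t ⬝ᵥ ((kernelMatrix1 K x)⁻¹ *ᵥ fvec1 f x)

/-- The GP conditional covariance `P_X(s,t) = K(s,t) - k_X(s)ᵀ K_X⁻¹ k_X(t)`. -/
def condCov1 (K : ℝ → ℝ → ℝ) {N : ℕ} (x : Fin N → ℝ) (s t : ℝ) : ℝ :=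
  K s t - kvec1 K x s ⬝ᵥ ((kernelMatrix1 K x)⁻¹ *ᵥ kvec1 K x t)

/-- The quadratic form `f_Xᵀ K_X⁻¹ f_X`. -/
def quadForm1 (K : ℝ → ℝ → ℝ) (f : ℝ → ℝ) {N : ℕ} (x : Fin N → ℝ) : ℝ :=
  fvec1 f x ⬝ᵥ ((kernelMatrix1 K x)⁻¹ *ᵥ fvec1 f x)

/-- The maximum likelihood estimate `σ_ML(f,X) = √(f_Xᵀ K_X⁻¹ f_X / N)`. -/
def sigmaML1 (K : ℝ → ℝ → ℝ) (f : ℝ → ℝ) {N : ℕ} (x : Fin N → ℝ) : ℝ :=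
  Real.sqrt (quadForm1 K f x / N)

/-- The integral `I(f) = ∫₀¹ f(t) dt` (weight `w ≡ 1`). -/
def intF1 (f : ℝ → ℝ) : ℝ := ∫ t in Set.Icc (0 : ℝ) 1, f t

/-- The Bayesian quadrature estimate `Q_X(f) = ∫₀¹ s_{f,X}(t) dt` (weight `w ≡ 1`). -/
def quadQ1 (K : ℝ → ℝ → ℝ) {N : ℕ} (x : Fin N → ℝ) (f : ℝ → ℝ) : ℝ :=
  ∫ t in Set.Icc (0 : ℝ) 1, condMean1 K x f t

/-- The Bayesian quadrature variance `V_X = ∫₀¹ ∫₀¹ P_X(s,t) ds dt` (weight `w ≡ 1`). -/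
def quadV1 (K : ℝ → ℝ → ℝ) {N : ℕ} (x : Fin N → ℝ) : ℝ :=
  ∫ s in Set.Icc (0 : ℝ) 1, ∫ t in Set.Icc (0 : ℝ) 1, condCov1 K x s t

/-- Credible-interval width `R_BC(f,X) = σ_ML(f,X) V_X^{1/2}`. -/
def RBC1 (K : ℝ → ℝ → ℝ) (f : ℝ → ℝ) {N : ℕ} (x : Fin N → ℝ) : ℝ :=
  sigmaML1 K f x * Real.sqrt (quadV1 K x)

/-- Standard score `|err|/R`, with the convention that it equals `1` when `R = 0`. -/
def score1 (err R : ℝ) : ℝ := if R = 0 then 1 else |err| / R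

/-- The Brownian motion kernel `K(s,t) = min{s,t}` on `[0,1]`. -/
def bmK : ℝ → ℝ → ℝ := fun s t => min s t

/-- The equispaced points `x_n = n/N`, `n = 1, …, N`. -/
def eqPts (N : ℕ) : Fin N → ℝ := fun i => ((i : ℕ) + 1 : ℝ) / N

end

/-!
For the Brownian kernel at nodes `0 < y₁ < ⋯ < y_N` the kernel matrix factors as `L D Lᵀ`, with
`L` the lower-triangular matrix of ones and `D` the diagonal of the mesh widths `hᵢ = yᵢ₊₁ - yᵢ`
(`y₀ = 0`), so `uᵀ K_X⁻¹ v = ∑ Δuᵢ Δvᵢ / hᵢ`. Consequently `Q_X` is the trapezoidal rule,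
`V_X = ∑ hᵢ³ / 12` is the integral of its Peano kernel `Φ ≥ 0`, and `N σ_ML² = ∑ (Δfᵢ)² / hᵢ`
lies between `f(1)²` (Cauchy–Schwarz) and `sup |f'|²` (mean value theorem). From
`Q_X(f) - I(f) = ∫ f'' Φ` we get `c V_X ≤ |I(f) - Q_X(f)| ≤ sup |f''| V_X`, so the score lies
between `c √V_X / σ_ML` and `sup |f''| √V_X / σ_ML`; for equispaced nodes `√V_X = 1 / (√12 N)`
and `σ_ML ≍ N^{-1/2}`.
-/

theorem integral_dotProduct_const {α ι : Type*} [MeasurableSpace α] [Fintype ι] {μ : Measure α}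
    {g : α → ι → ℝ} (hg : ∀ i, Integrable (fun a => g a i) μ) (c : ι → ℝ) :
    ∫ a, g a ⬝ᵥ c ∂μ = (fun i => ∫ a, g a i ∂μ) ⬝ᵥ c := by
  simp only [dotProduct]
  rw [integral_finsetSum _ fun i _ => (hg i).mul_const _]
  simp only [integral_mul_const]

section KernelQuadrature

variable {K : ℝ → ℝ → ℝ} {N : ℕ} (x : Fin N → ℝ)

noncomputable def kernelMean1 (K : ℝ → ℝ → ℝ) {N : ℕ} (x : Fin N → ℝ) : Fin N → ℝ :=
  fun i => ∫ t in Set.Icc (0 : ℝ) 1, K t (x i)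

theorem quadQ1_eq_kernelMean1_dotProduct (hK : Continuous (uncurry K)) (f : ℝ → ℝ) :
    quadQ1 K x f = kernelMean1 K x ⬝ᵥ ((kernelMatrix1 K x)⁻¹ *ᵥ fvec1 f x) :=
  integral_dotProduct_const
    (fun _ => (hK.comp (continuous_id.prodMk continuous_const)).integrableOn_Icc) _

theorem quadV1_eq_sub_kernelMean1_dotProduct (hK : Continuous (uncurry K)) :
    quadV1 K x = (∫ s in Set.Icc (0 : ℝ) 1, ∫ t in Set.Icc (0 : ℝ) 1, K s t) -
      kernelMean1 K x ⬝ᵥ ((kernelMatrix1 K x)⁻¹ *ᵥ kernelMean1 K x) := by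
  have hK₂ : ∀ s, Continuous (K s) := fun s => hK.comp (continuous_const.prodMk continuous_id)
  have hkvec : ∀ i, Continuous fun t => kvec1 K x t i :=
    fun i => hK.comp (continuous_id.prodMk continuous_const)
  have hkvec_dot : ∀ c, Continuous fun t => kvec1 K x t ⬝ᵥ c :=
    fun c => continuous_finsetSum _ fun i _ => (hkvec i).mul continuous_const
  have inner : ∀ s, ∫ t in Set.Icc (0 : ℝ) 1, condCov1 K x s t =
      (∫ t in Set.Icc (0 : ℝ) 1, K s t) -
        kvec1 K x s ⬝ᵥ ((kernelMatrix1 K x)⁻¹ *ᵥ kernelMean1 K x) := by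
    intro s
    have hswap : ∀ t, kvec1 K x s ⬝ᵥ ((kernelMatrix1 K x)⁻¹ *ᵥ kvec1 K x t) =
        kvec1 K x t ⬝ᵥ (kvec1 K x s ᵥ* (kernelMatrix1 K x)⁻¹) :=
      fun t => by rw [dotProduct_mulVec, dotProduct_comm]
    simp only [condCov1, hswap]
    rw [integral_sub (hK₂ s).integrableOn_Icc (hkvec_dot _).integrableOn_Icc,
      integral_dotProduct_const fun i => (hkvec i).integrableOn_Icc, dotProduct_comm,
      ← dotProduct_mulVec]
    rfl
  simp only [quadV1, inner]
  rw [integral_sub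
      (continuous_parametric_integral_of_continuous hK isCompact_Icc).integrableOn_Icc
      (hkvec_dot _).integrableOn_Icc,
    integral_dotProduct_const fun i => (hkvec i).integrableOn_Icc]
  rfl

end KernelQuadrature

section DifferenceMatrix

def diffMatrix (N : ℕ) : Matrix (Fin N) (Fin N) ℝ :=
  of fun i j => (if j = i then 1 else 0) - (if (j : ℕ) + 1 = i then 1 else 0)

def cumsumMatrix (N : ℕ) : Matrix (Fin N) (Fin N) ℝ :=
  of fun i j => if j ≤ i then 1 else 0

theorem diffMatrix_mulVec {N : ℕ} (G : ℕ → ℝ) (hG : G 0 = 0) (i : Fin N) :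
    (diffMatrix N *ᵥ fun k => G (k + 1)) i = G (i + 1) - G i := by
  obtain ⟨m, hm⟩ := i
  simp only [mulVec, dotProduct, diffMatrix, of_apply, sub_mul, Finset.sum_sub_distrib, ite_mul,
    one_mul, zero_mul, Finset.sum_ite_eq', Finset.mem_univ, if_true]
  rw [Fin.sum_univ_eq_sum_range (fun k => if k + 1 = m then G (k + 1) else 0)]
  cases m with
  | zero => simp [hG]
  | succ n =>
    simp only [Nat.add_right_cancel_iff, Finset.sum_ite_eq', Finset.mem_range]
    rw [if_pos (by omega)]

theorem diffMatrix_mul_cumsumMatrix (N : ℕ) : diffMatrix N * cumsumMatrix N = 1 := by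
  ext i j
  have := diffMatrix_mulVec (fun n => if (j : ℕ) < n then 1 else 0) (by simp) i
  simp only [Nat.lt_succ_iff] at this
  rw [one_apply]
  convert this using 1
  · simp only [mul_apply, mulVec, dotProduct, cumsumMatrix, of_apply, Fin.le_def]
  · simp only [← Fin.val_inj]
    split_ifs <;> first | omega | norm_num

theorem cumsumMatrix_mul_diffMatrix (N : ℕ) : cumsumMatrix N * diffMatrix N = 1 :=
  mul_eq_one_comm.mp (diffMatrix_mul_cumsumMatrix N)

end DifferenceMatrix

section BrownianKernelMatrix

variable {y : ℕ → ℝ} {N : ℕ}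

/-- Node `i` is `y (i + 1)`; the left end `y₀ = 0`, where `min` is degenerate, is not a node. -/
def partitionNodes (y : ℕ → ℝ) (N : ℕ) : Fin N → ℝ := fun i => y ((i : ℕ) + 1)

theorem kernelMatrix1_bmK_mul_transpose_diffMatrix (hy : Monotone y) (hy0 : y 0 = 0) :
    kernelMatrix1 bmK (partitionNodes y N) * (diffMatrix N)ᵀ =
      cumsumMatrix N * diagonal fun j : Fin N => y ((j : ℕ) + 1) - y j := by
  ext i j
  have hG := diffMatrix_mulVec (fun n => min (y (i + 1)) (y n))
    (by simp only [hy0]; exact min_eq_right (hy0 ▸ hy (Nat.zero_le _))) j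
  rw [mul_diagonal]
  convert hG using 1
  · simp only [mul_apply, mulVec, dotProduct, transpose_apply, mul_comm]
    rfl
  · simp only [cumsumMatrix, of_apply, Fin.le_def]
    split_ifs with hji
    · rw [min_eq_right (hy (by omega)), min_eq_right (hy (by omega)), one_mul]
    · rw [min_eq_left (hy (by omega)), min_eq_left (hy (by omega)), sub_self, zero_mul]

theorem inv_kernelMatrix1_bmK (hy : StrictMono y) (hy0 : y 0 = 0) :
    (kernelMatrix1 bmK (partitionNodes y N))⁻¹ =
      (diffMatrix N)ᵀ * diagonal (fun j : Fin N => (y ((j : ℕ) + 1) - y j)⁻¹) * diffMatrix N := by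
  apply inv_eq_right_inv
  have hD : (diagonal fun j : Fin N => y ((j : ℕ) + 1) - y j) *
      diagonal (fun j : Fin N => (y ((j : ℕ) + 1) - y j)⁻¹) = 1 := by
    rw [diagonal_mul_diagonal, ← diagonal_one]
    exact congrArg diagonal <| funext fun j =>
      mul_inv_cancel₀ (sub_ne_zero.2 (hy (Nat.lt_succ_self _)).ne')
  rw [← Matrix.mul_assoc, ← Matrix.mul_assoc,
    kernelMatrix1_bmK_mul_transpose_diffMatrix hy.monotone hy0, Matrix.mul_assoc (cumsumMatrix N),
    hD, Matrix.mul_one, cumsumMatrix_mul_diffMatrix]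

theorem dotProduct_inv_kernelMatrix1_bmK_mulVec (hy : StrictMono y) (hy0 : y 0 = 0)
    {U V : ℕ → ℝ} (hU : U 0 = 0) (hV : V 0 = 0) :
    (fun k : Fin N => U ((k : ℕ) + 1)) ⬝ᵥ
        ((kernelMatrix1 bmK (partitionNodes y N))⁻¹ *ᵥ fun k : Fin N => V ((k : ℕ) + 1)) =
      ∑ i ∈ Finset.range N, (U (i + 1) - U i) * (V (i + 1) - V i) / (y (i + 1) - y i) := by
  rw [inv_kernelMatrix1_bmK hy hy0, ← mulVec_mulVec, ← mulVec_mulVec, dotProduct_mulVec,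
    vecMul_transpose, dotProduct]
  simp only [mulVec_diagonal, diffMatrix_mulVec U hU, diffMatrix_mulVec V hV]
  rw [← Fin.sum_univ_eq_sum_range]
  exact Finset.sum_congr rfl fun i _ => by ring

end BrownianKernelMatrix

theorem integral_min_Icc {x : ℝ} (hx : x ∈ Set.Icc (0 : ℝ) 1) :
    ∫ t in Set.Icc (0 : ℝ) 1, min t x = x - x ^ 2 / 2 := by
  have hcont : Continuous fun t : ℝ => min t x := continuous_id.min continuous_const
  have left : ∫ t in (0 : ℝ)..x, min t x = ∫ t in (0 : ℝ)..x, t :=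
    intervalIntegral.integral_congr fun t ht => min_eq_left (Set.uIcc_of_le hx.1 ▸ ht).2
  have right : ∫ t in x..(1 : ℝ), min t x = ∫ _ in x..(1 : ℝ), x :=
    intervalIntegral.integral_congr fun t ht => min_eq_right (Set.uIcc_of_le hx.2 ▸ ht).1
  rw [integral_Icc_eq_integral_Ioc, ← intervalIntegral.integral_of_le zero_le_one,
    ← intervalIntegral.integral_add_adjacent_intervals (b := x)
      (hcont.intervalIntegrable _ _) (hcont.intervalIntegrable _ _), left, right, integral_id,
    intervalIntegral.integral_const, smul_eq_mul]
  ring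

theorem continuous_uncurry_bmK : Continuous (uncurry bmK) := continuous_min

theorem integral_integral_bmK :
    ∫ s in Set.Icc (0 : ℝ) 1, ∫ t in Set.Icc (0 : ℝ) 1, bmK s t = 1 / 3 := by
  have inner : ∀ s ∈ Set.Icc (0 : ℝ) 1, ∫ t in Set.Icc (0 : ℝ) 1, bmK s t = s - s ^ 2 / 2 :=
    fun s hs => by simp only [bmK, min_comm s]; exact integral_min_Icc hs
  rw [setIntegral_congr_fun measurableSet_Icc inner, integral_Icc_eq_integral_Ioc,
    ← intervalIntegral.integral_of_le zero_le_one]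
  norm_num [integral_id, integral_pow]

noncomputable def trapezoidSum (y : ℕ → ℝ) (N : ℕ) (f : ℝ → ℝ) : ℝ :=
  ∑ i ∈ Finset.range N, (y (i + 1) - y i) * (f (y i) + f (y (i + 1))) / 2

noncomputable def peanoKernelIntegral (y : ℕ → ℝ) (N : ℕ) : ℝ :=
  ∑ i ∈ Finset.range N, (y (i + 1) - y i) ^ 3 / 12

section BrownianQuadrature

variable {y : ℕ → ℝ} {N : ℕ} {f : ℝ → ℝ}

theorem mem_Icc_of_partition (hy : Monotone y) (hy0 : y 0 = 0) (hyN : y N = 1) {n : ℕ}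
    (hn : n ≤ N) : y n ∈ Set.Icc (0 : ℝ) 1 :=
  ⟨hy0 ▸ hy n.zero_le, hyN ▸ hy hn⟩

theorem kernelMean1_bmK (hy : Monotone y) (hy0 : y 0 = 0) (hyN : y N = 1) :
    kernelMean1 bmK (partitionNodes y N) =
      fun k : Fin N => y ((k : ℕ) + 1) - y ((k : ℕ) + 1) ^ 2 / 2 :=
  funext fun k => integral_min_Icc (mem_Icc_of_partition hy hy0 hyN k.isLt)

theorem quadQ1_bmK (hy : StrictMono y) (hy0 : y 0 = 0) (hyN : y N = 1) (hf0 : f 0 = 0) :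
    quadQ1 bmK (partitionNodes y N) f = trapezoidSum y N f := by
  rw [quadQ1_eq_kernelMean1_dotProduct _ continuous_uncurry_bmK,
    kernelMean1_bmK hy.monotone hy0 hyN]
  refine (dotProduct_inv_kernelMatrix1_bmK_mulVec hy hy0 (U := fun n => y n - y n ^ 2 / 2)
    (V := fun n => f (y n)) (by simp [hy0]) (by simp [hy0, hf0])).trans ?_
  -- summation by parts against `1 - t`, the antiderivative of the weight vanishing at `y_N = 1`
  have key : ∀ i ∈ Finset.range N,
      (y (i + 1) - y (i + 1) ^ 2 / 2 - (y i - y i ^ 2 / 2)) * (f (y (i + 1)) - f (y i)) /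
          (y (i + 1) - y i) =
        (y (i + 1) - y i) * (f (y i) + f (y (i + 1))) / 2 +
          (f (y (i + 1)) * (1 - y (i + 1)) - f (y i) * (1 - y i)) := by
    intro i _
    have : y (i + 1) - y i ≠ 0 := sub_ne_zero.2 (hy (Nat.lt_succ_self i)).ne'
    field_simp
    ring
  rw [Finset.sum_congr rfl key, Finset.sum_add_distrib,
    Finset.sum_range_sub (fun n => f (y n) * (1 - y n)), hyN, hy0, hf0]
  simp [trapezoidSum]

theorem quadV1_bmK (hy : StrictMono y) (hy0 : y 0 = 0) (hyN : y N = 1) :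
    quadV1 bmK (partitionNodes y N) = peanoKernelIntegral y N := by
  rw [quadV1_eq_sub_kernelMean1_dotProduct _ continuous_uncurry_bmK, integral_integral_bmK,
    kernelMean1_bmK hy.monotone hy0 hyN,
    dotProduct_inv_kernelMatrix1_bmK_mulVec hy hy0 (U := fun n => y n - y n ^ 2 / 2)
      (V := fun n => y n - y n ^ 2 / 2) (by simp [hy0]) (by simp [hy0])]
  -- midpoint rule for `∫ (1 - t)²` on each cell, whose error is `h³ / 12`
  have key : ∀ i ∈ Finset.range N,
      (y (i + 1) - y (i + 1) ^ 2 / 2 - (y i - y i ^ 2 / 2)) *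
          (y (i + 1) - y (i + 1) ^ 2 / 2 - (y i - y i ^ 2 / 2)) / (y (i + 1) - y i) =
        (-(1 - y (i + 1)) ^ 3 / 3 - -(1 - y i) ^ 3 / 3) - (y (i + 1) - y i) ^ 3 / 12 := by
    intro i _
    have : y (i + 1) - y i ≠ 0 := sub_ne_zero.2 (hy (Nat.lt_succ_self i)).ne'
    field_simp
    ring
  rw [Finset.sum_congr rfl key, Finset.sum_sub_distrib,
    Finset.sum_range_sub (fun n => -(1 - y n) ^ 3 / 3), hyN, hy0, peanoKernelIntegral]
  norm_num

theorem quadForm1_bmK (hy : StrictMono y) (hy0 : y 0 = 0) (hf0 : f 0 = 0) :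
    quadForm1 bmK f (partitionNodes y N) =
      ∑ i ∈ Finset.range N, (f (y (i + 1)) - f (y i)) ^ 2 / (y (i + 1) - y i) := by
  simp only [sq]
  exact dotProduct_inv_kernelMatrix1_bmK_mulVec hy hy0 (U := fun n => f (y n))
    (V := fun n => f (y n)) (by simp [hy0, hf0]) (by simp [hy0, hf0])

theorem sq_le_quadForm1_bmK (hy : StrictMono y) (hy0 : y 0 = 0) (hyN : y N = 1)
    (hf0 : f 0 = 0) : f 1 ^ 2 ≤ quadForm1 bmK f (partitionNodes y N) := by
  have h := Finset.sq_sum_div_le_sum_sq_div (Finset.range N) (fun i => f (y (i + 1)) - f (y i))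
    (g := fun i => y (i + 1) - y i) fun i _ => sub_pos.2 (hy (Nat.lt_succ_self i))
  rwa [Finset.sum_range_sub (fun n => f (y n)), Finset.sum_range_sub, hyN, hy0, hf0, sub_zero,
    sub_zero, div_one, ← quadForm1_bmK hy hy0 hf0] at h

theorem quadForm1_bmK_le (hy : StrictMono y) (hy0 : y 0 = 0) (hyN : y N = 1) (hf0 : f 0 = 0)
    {L : ℝ} (hf : ∀ t ∈ Set.Icc (0 : ℝ) 1, DifferentiableAt ℝ f t)
    (hL : ∀ t ∈ Set.Icc (0 : ℝ) 1, |deriv f t| ≤ L) :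
    quadForm1 bmK f (partitionNodes y N) ≤ L ^ 2 := by
  have cell : ∀ i ∈ Finset.range N,
      (f (y (i + 1)) - f (y i)) ^ 2 / (y (i + 1) - y i) ≤ L ^ 2 * (y (i + 1) - y i) := by
    intro i hi
    have hh : 0 < y (i + 1) - y i := sub_pos.2 (hy (Nat.lt_succ_self i))
    have hmem := fun {n} (hn : n ≤ N) => mem_Icc_of_partition hy.monotone hy0 hyN hn
    have lip := (convex_Icc (0 : ℝ) 1).norm_image_sub_le_of_norm_deriv_le hf hL
      (hmem (Finset.mem_range.1 hi).le) (hmem (Finset.mem_range.1 hi))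
    rw [Real.norm_eq_abs, Real.norm_eq_abs, abs_of_pos hh] at lip
    rw [div_le_iff₀ hh, ← sq_abs]
    nlinarith [abs_nonneg (f (y (i + 1)) - f (y i))]
  calc quadForm1 bmK f (partitionNodes y N)
      ≤ ∑ i ∈ Finset.range N, L ^ 2 * (y (i + 1) - y i) := by
        rw [quadForm1_bmK hy hy0 hf0]; exact Finset.sum_le_sum cell
    _ = L ^ 2 := by rw [← Finset.mul_sum, Finset.sum_range_sub, hyN, hy0, sub_zero, mul_one]

end BrownianQuadrature

section PeanoKernel

noncomputable def peanoKernel (a b t : ℝ) : ℝ := (t - a) * (b - t) / 2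

theorem continuous_peanoKernel (a b : ℝ) : Continuous (peanoKernel a b) := by
  unfold peanoKernel; fun_prop

theorem peanoKernel_nonneg {a b t : ℝ} (ht : t ∈ Set.Icc a b) : 0 ≤ peanoKernel a b t :=
  div_nonneg (mul_nonneg (sub_nonneg.2 ht.1) (sub_nonneg.2 ht.2)) zero_le_two

theorem integral_peanoKernel (a b : ℝ) : ∫ t in a..b, peanoKernel a b t = (b - a) ^ 3 / 12 := by
  have hF : ∀ t ∈ Set.uIcc a b,
      HasDerivAt (fun t => -(t ^ 3 / 6) + (a + b) / 4 * t ^ 2 - a * b / 2 * t)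
        (peanoKernel a b t) t := fun t _ =>
    ((((hasDerivAt_pow 3 t).div_const 6).neg.add
      ((hasDerivAt_pow 2 t).const_mul ((a + b) / 4))).sub
      ((hasDerivAt_id t).const_mul (a * b / 2))).congr_deriv (by unfold peanoKernel; ring)
  rw [intervalIntegral.integral_eq_sub_of_hasDerivAt hF
    ((continuous_peanoKernel a b).intervalIntegrable _ _)]
  ring

theorem trapezoid_sub_integral_eq_integral_mul_peanoKernel {f f' f'' : ℝ → ℝ} {a b : ℝ}
    (hab : a ≤ b) (hf : ∀ t ∈ Set.Icc a b, HasDerivAt f (f' t) t)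
    (hf' : ∀ t ∈ Set.Icc a b, HasDerivAt f' (f'' t) t)
    (hf'' : IntervalIntegrable f'' volume a b) :
    (b - a) * (f a + f b) / 2 - ∫ t in a..b, f t = ∫ t in a..b, f'' t * peanoKernel a b t := by
  rw [← Set.uIcc_of_le hab] at hf hf'
  have hφ : ∀ t, HasDerivAt (peanoKernel a b) ((a + b) / 2 - t) t := fun t =>
    ((((hasDerivAt_id t).sub_const a).mul ((hasDerivAt_id t).const_sub b)).div_const 2
      ).congr_deriv (by simp only [id]; ring)
  -- `φ'' = -1` and `φ` vanishes at both ends, so `f' φ - f φ'` is an antiderivative of `f'' φ + f`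
  have hF : ∀ t ∈ Set.uIcc a b,
      HasDerivAt (fun t => f' t * peanoKernel a b t - f t * ((a + b) / 2 - t))
        (f'' t * peanoKernel a b t + f t) t := fun t ht =>
    (((hf' t ht).mul (hφ t)).sub ((hf t ht).mul ((hasDerivAt_id t).const_sub _))
      ).congr_deriv (by simp only [id]; ring)
  have hfc : ContinuousOn f (Set.uIcc a b) := fun t ht => (hf t ht).continuousAt.continuousWithinAt
  have hφc := (continuous_peanoKernel a b).continuousOn (s := Set.uIcc a b)
  have hFTC := intervalIntegral.integral_eq_sub_of_hasDerivAt hF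
    ((hf''.mul_continuousOn hφc).add hfc.intervalIntegrable)
  rw [intervalIntegral.integral_add (hf''.mul_continuousOn hφc) hfc.intervalIntegrable] at hFTC
  have hφa : peanoKernel a b a = 0 := by simp [peanoKernel]
  have hφb : peanoKernel a b b = 0 := by simp [peanoKernel]
  rw [hφa, hφb] at hFTC
  linear_combination -hFTC

end PeanoKernel

section CompositeTrapezoid

variable {y : ℕ → ℝ} {N : ℕ} {f f' f'' : ℝ → ℝ}

noncomputable def peanoIntegral (y : ℕ → ℝ) (N : ℕ) (g : ℝ → ℝ) : ℝ :=
  ∑ i ∈ Finset.range N, ∫ t in y i..y (i + 1), g t * peanoKernel (y i) (y (i + 1)) t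

theorem Icc_subset_Icc_of_partition (hy : Monotone y) (hy0 : y 0 = 0) (hyN : y N = 1) {i : ℕ}
    (hi : i < N) : Set.Icc (y i) (y (i + 1)) ⊆ Set.Icc 0 1 :=
  Set.Icc_subset_Icc (mem_Icc_of_partition hy hy0 hyN hi.le).1
    (mem_Icc_of_partition hy hy0 hyN hi).2

theorem trapezoidSum_sub_intF1 (hy : Monotone y) (hy0 : y 0 = 0) (hyN : y N = 1)
    (hf : ∀ t ∈ Set.Icc (0 : ℝ) 1, HasDerivAt f (f' t) t)
    (hf' : ∀ t ∈ Set.Icc (0 : ℝ) 1, HasDerivAt f' (f'' t) t)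
    (hf'' : IntegrableOn f'' (Set.Icc 0 1)) :
    trapezoidSum y N f - intF1 f = peanoIntegral y N f'' := by
  have hcell := fun {i} (hi : i < N) => Icc_subset_Icc_of_partition hy hy0 hyN hi
  have hfc : ContinuousOn f (Set.Icc 0 1) := fun t ht => (hf t ht).continuousAt.continuousWithinAt
  rw [intF1, integral_Icc_eq_integral_Ioc, ← intervalIntegral.integral_of_le zero_le_one,
    ← hy0, ← hyN, ← intervalIntegral.sum_integral_adjacent_intervals fun i hi =>
      (hfc.mono (hcell hi)).intervalIntegrable_of_Icc (hy i.le_succ),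
    trapezoidSum, peanoIntegral, ← Finset.sum_sub_distrib]
  refine Finset.sum_congr rfl fun i hi => ?_
  have hi := Finset.mem_range.1 hi
  exact trapezoid_sub_integral_eq_integral_mul_peanoKernel (hy i.le_succ)
    (fun t ht => hf t (hcell hi ht)) (fun t ht => hf' t (hcell hi ht))
    ((intervalIntegrable_iff_integrableOn_Icc_of_le (hy i.le_succ)).2 (hf''.mono_set (hcell hi)))

theorem peanoIntegral_const (c : ℝ) :
    peanoIntegral y N (fun _ => c) = c * peanoKernelIntegral y N := by
  simp only [peanoIntegral, peanoKernelIntegral, Finset.mul_sum,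
    intervalIntegral.integral_const_mul, integral_peanoKernel]

theorem peanoIntegral_mono (hy : Monotone y) (hy0 : y 0 = 0) (hyN : y N = 1) {g₁ g₂ : ℝ → ℝ}
    (hg₁ : IntegrableOn g₁ (Set.Icc 0 1)) (hg₂ : IntegrableOn g₂ (Set.Icc 0 1))
    (hg : ∀ t ∈ Set.Icc (0 : ℝ) 1, g₁ t ≤ g₂ t) : peanoIntegral y N g₁ ≤ peanoIntegral y N g₂ := by
  refine Finset.sum_le_sum fun i hi => ?_
  have hcell := Icc_subset_Icc_of_partition hy hy0 hyN (Finset.mem_range.1 hi)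
  have hint : ∀ {g : ℝ → ℝ}, IntegrableOn g (Set.Icc 0 1) →
      IntervalIntegrable (fun t => g t * peanoKernel (y i) (y (i + 1)) t) volume
        (y i) (y (i + 1)) :=
    fun hg => ((intervalIntegrable_iff_integrableOn_Icc_of_le (hy i.le_succ)).2
      (hg.mono_set hcell)).mul_continuousOn (continuous_peanoKernel _ _).continuousOn
  exact intervalIntegral.integral_mono_on (hy i.le_succ) (hint hg₁) (hint hg₂) fun t ht =>
    mul_le_mul_of_nonneg_right (hg t (hcell ht)) (peanoKernel_nonneg ht)

end CompositeTrapezoid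

theorem score1_le {e σ V M : ℝ} (hσ : 0 < σ) (hV : 0 < V) (he : |e| ≤ M * V) :
    score1 e (σ * √V) ≤ M * √V / σ := by
  have hsV : 0 < √V := Real.sqrt_pos.2 hV
  rw [score1, if_neg (by positivity), div_le_div_iff₀ (by positivity) hσ]
  calc |e| * σ ≤ M * V * σ := by gcongr
    _ = M * √V * (σ * √V) := by linear_combination M * σ * (Real.mul_self_sqrt hV.le).symm

theorem le_score1 {e σ V c : ℝ} (hσ : 0 < σ) (hV : 0 < V) (he : c * V ≤ |e|) :
    c * √V / σ ≤ score1 e (σ * √V) := by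
  have hsV : 0 < √V := Real.sqrt_pos.2 hV
  rw [score1, if_neg (by positivity), div_le_div_iff₀ hσ (by positivity)]
  calc c * √V * (σ * √V) = c * V * σ := by linear_combination c * σ * Real.mul_self_sqrt hV.le
    _ ≤ |e| * σ := by gcongr

theorem rpow_neg_one_half_eq_inv_sqrt {x : ℝ} (hx : 0 ≤ x) : x ^ (-(1 / 2 : ℝ)) = (√x)⁻¹ := by
  rw [Real.rpow_neg hx, ← Real.sqrt_eq_rpow]

theorem natCast_mul_sigmaML1 {N : ℕ} (K : ℝ → ℝ → ℝ) (f : ℝ → ℝ) (x : Fin N → ℝ) :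
    N * sigmaML1 K f x = √(quadForm1 K f x) * √N := by
  rcases N.eq_zero_or_pos with rfl | hN
  · simp
  · have : √(N : ℝ) ≠ 0 := (Real.sqrt_pos.2 (Nat.cast_pos.2 hN)).ne'
    rw [sigmaML1, Real.sqrt_div' _ (Nat.cast_nonneg N)]
    nth_rw 1 [← Real.mul_self_sqrt (Nat.cast_nonneg N)]
    field_simp

section BrownianScore

variable {y : ℕ → ℝ} {N : ℕ} {f f' f'' : ℝ → ℝ}

theorem ne_zero_of_partition (hy0 : y 0 = 0) (hyN : y N = 1) : N ≠ 0 := by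
  rintro rfl
  exact zero_ne_one (hy0.symm.trans hyN)

theorem peanoKernelIntegral_pos (hy : StrictMono y) (hN : N ≠ 0) : 0 < peanoKernelIntegral y N :=
  Finset.sum_pos (fun i _ => by have := sub_pos.2 (hy (Nat.lt_succ_self i)); positivity)
    (Finset.nonempty_range_iff.2 hN)

theorem sigmaML1_bmK_pos (hy : StrictMono y) (hy0 : y 0 = 0) (hyN : y N = 1) (hf0 : f 0 = 0)
    (hf1 : f 1 ≠ 0) : 0 < sigmaML1 bmK f (partitionNodes y N) := by
  have hN : (0 : ℝ) < N := Nat.cast_pos.2 (Nat.pos_of_ne_zero (ne_zero_of_partition hy0 hyN))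
  exact Real.sqrt_pos.2 (div_pos ((sq_pos_of_ne_zero hf1).trans_le
    (sq_le_quadForm1_bmK hy hy0 hyN hf0)) hN)

theorem score1_bmK_le (hy : StrictMono y) (hy0 : y 0 = 0) (hyN : y N = 1) (hf0 : f 0 = 0)
    (hf1 : f 1 ≠ 0) (hf : ∀ t ∈ Set.Icc (0 : ℝ) 1, HasDerivAt f (f' t) t)
    (hf' : ∀ t ∈ Set.Icc (0 : ℝ) 1, HasDerivAt f' (f'' t) t)
    (hf'' : IntegrableOn f'' (Set.Icc 0 1)) {M : ℝ} (hM : ∀ t ∈ Set.Icc (0 : ℝ) 1, |f'' t| ≤ M) :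
    score1 (intF1 f - quadQ1 bmK (partitionNodes y N) f) (RBC1 bmK f (partitionNodes y N)) ≤
      M * √(peanoKernelIntegral y N) / sigmaML1 bmK f (partitionNodes y N) := by
  rw [RBC1, quadV1_bmK hy hy0 hyN, quadQ1_bmK hy hy0 hyN hf0]
  refine score1_le (sigmaML1_bmK_pos hy hy0 hyN hf0 hf1)
    (peanoKernelIntegral_pos hy (ne_zero_of_partition hy0 hyN)) ?_
  rw [abs_sub_comm, trapezoidSum_sub_intF1 hy.monotone hy0 hyN hf hf' hf'']
  refine abs_le.2 ⟨?_, ?_⟩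
  · rw [← neg_mul, ← peanoIntegral_const]
    exact peanoIntegral_mono hy.monotone hy0 hyN continuous_const.integrableOn_Icc hf'' fun t ht =>
      (abs_le.1 (hM t ht)).1
  · rw [← peanoIntegral_const]
    exact peanoIntegral_mono hy.monotone hy0 hyN hf'' continuous_const.integrableOn_Icc fun t ht =>
      (abs_le.1 (hM t ht)).2

theorem le_score1_bmK (hy : StrictMono y) (hy0 : y 0 = 0) (hyN : y N = 1) (hf0 : f 0 = 0)
    (hf1 : f 1 ≠ 0) (hf : ∀ t ∈ Set.Icc (0 : ℝ) 1, HasDerivAt f (f' t) t)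
    (hf' : ∀ t ∈ Set.Icc (0 : ℝ) 1, HasDerivAt f' (f'' t) t)
    (hf'' : IntegrableOn f'' (Set.Icc 0 1)) {c : ℝ} (hc : ∀ t ∈ Set.Icc (0 : ℝ) 1, c ≤ f'' t) :
    c * √(peanoKernelIntegral y N) / sigmaML1 bmK f (partitionNodes y N) ≤
      score1 (intF1 f - quadQ1 bmK (partitionNodes y N) f) (RBC1 bmK f (partitionNodes y N)) := by
  rw [RBC1, quadV1_bmK hy hy0 hyN, quadQ1_bmK hy hy0 hyN hf0]
  refine le_score1 (sigmaML1_bmK_pos hy hy0 hyN hf0 hf1)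
    (peanoKernelIntegral_pos hy (ne_zero_of_partition hy0 hyN)) ?_
  rw [abs_sub_comm, trapezoidSum_sub_intF1 hy.monotone hy0 hyN hf hf' hf'', ← peanoIntegral_const]
  exact (peanoIntegral_mono hy.monotone hy0 hyN continuous_const.integrableOn_Icc hf'' hc).trans
    (le_abs_self _)

end BrownianScore

section Uniform

variable {N : ℕ} {f f' f'' : ℝ → ℝ}

theorem eqPts_eq_partitionNodes (N : ℕ) : eqPts N = partitionNodes (fun n => (n : ℝ) / N) N := by
  funext i
  simp [eqPts, partitionNodes]

theorem strictMono_natCast_div (hN : 0 < N) : StrictMono fun n : ℕ => (n : ℝ) / N :=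
  fun _ _ h => div_lt_div_of_pos_right (Nat.cast_lt.2 h) (Nat.cast_pos.2 hN)

theorem sqrt_peanoKernelIntegral_uniform (hN : 0 < N) :
    √(peanoKernelIntegral (fun n => (n : ℝ) / N) N) = (√12 * N)⁻¹ := by
  have hN' : (N : ℝ) ≠ 0 := Nat.cast_ne_zero.2 hN.ne'
  have hP : peanoKernelIntegral (fun n => (n : ℝ) / N) N = ((√12 * N)⁻¹) ^ 2 := by
    simp only [peanoKernelIntegral, Nat.cast_succ, ← sub_div, add_sub_cancel_left,
      Finset.sum_const, Finset.card_range, nsmul_eq_mul, inv_pow, mul_pow,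
      Real.sq_sqrt (show (0 : ℝ) ≤ 12 by norm_num)]
    field_simp
  rw [hP, Real.sqrt_sq (by positivity)]

theorem score1_eqPts_le (hN : 0 < N) (hf0 : f 0 = 0) (hf1 : f 1 ≠ 0)
    (hf : ∀ t ∈ Set.Icc (0 : ℝ) 1, HasDerivAt f (f' t) t)
    (hf' : ∀ t ∈ Set.Icc (0 : ℝ) 1, HasDerivAt f' (f'' t) t)
    (hf'' : IntegrableOn f'' (Set.Icc 0 1)) {M : ℝ} (hM : ∀ t ∈ Set.Icc (0 : ℝ) 1, |f'' t| ≤ M) :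
    score1 (intF1 f - quadQ1 bmK (eqPts N) f) (RBC1 bmK f (eqPts N)) ≤
      M / (√12 * N * sigmaML1 bmK f (eqPts N)) := by
  have h := score1_bmK_le (strictMono_natCast_div hN) (by simp)
    (div_self (Nat.cast_ne_zero.2 hN.ne')) hf0 hf1 hf hf' hf'' hM
  rw [sqrt_peanoKernelIntegral_uniform hN, ← eqPts_eq_partitionNodes] at h
  exact h.trans_eq (by ring)

theorem le_score1_eqPts (hN : 0 < N) (hf0 : f 0 = 0) (hf1 : f 1 ≠ 0)
    (hf : ∀ t ∈ Set.Icc (0 : ℝ) 1, HasDerivAt f (f' t) t)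
    (hf' : ∀ t ∈ Set.Icc (0 : ℝ) 1, HasDerivAt f' (f'' t) t)
    (hf'' : IntegrableOn f'' (Set.Icc 0 1)) {c : ℝ} (hc : ∀ t ∈ Set.Icc (0 : ℝ) 1, c ≤ f'' t) :
    c / (√12 * N * sigmaML1 bmK f (eqPts N)) ≤
      score1 (intF1 f - quadQ1 bmK (eqPts N) f) (RBC1 bmK f (eqPts N)) := by
  have h := le_score1_bmK (strictMono_natCast_div hN) (by simp)
    (div_self (Nat.cast_ne_zero.2 hN.ne')) hf0 hf1 hf hf' hf'' hc
  rw [sqrt_peanoKernelIntegral_uniform hN, ← eqPts_eq_partitionNodes] at h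
  exact (le_of_eq (by ring)).trans h

theorem abs_mul_sqrt_le_natCast_mul_sigmaML1_eqPts (hN : 0 < N) (hf0 : f 0 = 0) :
    |f 1| * √N ≤ N * sigmaML1 bmK f (eqPts N) := by
  rw [natCast_mul_sigmaML1, eqPts_eq_partitionNodes]
  exact mul_le_mul_of_nonneg_right (Real.abs_le_sqrt (sq_le_quadForm1_bmK
    (strictMono_natCast_div hN) (by simp) (div_self (Nat.cast_ne_zero.2 hN.ne')) hf0))
    (Real.sqrt_nonneg _)

theorem natCast_mul_sigmaML1_eqPts_le (hN : 0 < N) (hf0 : f 0 = 0) {L : ℝ}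
    (hf : ∀ t ∈ Set.Icc (0 : ℝ) 1, DifferentiableAt ℝ f t)
    (hL : ∀ t ∈ Set.Icc (0 : ℝ) 1, |deriv f t| ≤ L) :
    N * sigmaML1 bmK f (eqPts N) ≤ L * √N := by
  have hL0 : 0 ≤ L := (abs_nonneg _).trans (hL 0 ⟨le_rfl, zero_le_one⟩)
  rw [natCast_mul_sigmaML1, eqPts_eq_partitionNodes]
  exact mul_le_mul_of_nonneg_right (Real.sqrt_le_iff.2 ⟨hL0, quadForm1_bmK_le
    (strictMono_natCast_div hN) (by simp) (div_self (Nat.cast_ne_zero.2 hN.ne')) hf0 hf hL⟩)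
    (Real.sqrt_nonneg _)

theorem score1_eqPts_le_rpow (hN : 0 < N) (hf0 : f 0 = 0) (hf1 : f 1 ≠ 0)
    (hf : ∀ t ∈ Set.Icc (0 : ℝ) 1, HasDerivAt f (f' t) t)
    (hf' : ∀ t ∈ Set.Icc (0 : ℝ) 1, HasDerivAt f' (f'' t) t)
    (hf'' : IntegrableOn f'' (Set.Icc 0 1)) {M : ℝ} (hM : ∀ t ∈ Set.Icc (0 : ℝ) 1, |f'' t| ≤ M) :
    score1 (intF1 f - quadQ1 bmK (eqPts N) f) (RBC1 bmK f (eqPts N)) ≤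
      M / (√12 * |f 1|) * (N : ℝ) ^ (-(1 / 2 : ℝ)) := by
  have hM0 : 0 ≤ M := (abs_nonneg _).trans (hM 0 ⟨le_rfl, zero_le_one⟩)
  have hpos : 0 < √12 * (|f 1| * √N) :=
    mul_pos (by positivity) (mul_pos (abs_pos.2 hf1) (Real.sqrt_pos.2 (Nat.cast_pos.2 hN)))
  calc _ ≤ M / (√12 * (N * sigmaML1 bmK f (eqPts N))) := by
        rw [← mul_assoc]; exact score1_eqPts_le hN hf0 hf1 hf hf' hf'' hM
    _ ≤ M / (√12 * (|f 1| * √N)) := div_le_div_of_nonneg_left hM0 hpos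
        (mul_le_mul_of_nonneg_left (abs_mul_sqrt_le_natCast_mul_sigmaML1_eqPts hN hf0)
          (Real.sqrt_nonneg _))
    _ = _ := by rw [rpow_neg_one_half_eq_inv_sqrt (Nat.cast_nonneg _)]; ring

theorem le_score1_eqPts_rpow (hN : 0 < N) (hf0 : f 0 = 0) (hf1 : f 1 ≠ 0)
    (hf : ∀ t ∈ Set.Icc (0 : ℝ) 1, DifferentiableAt ℝ f t)
    (hf' : ∀ t ∈ Set.Icc (0 : ℝ) 1, HasDerivAt (deriv f) (f'' t) t)
    (hf'' : IntegrableOn f'' (Set.Icc 0 1)) {L c : ℝ}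
    (hL : ∀ t ∈ Set.Icc (0 : ℝ) 1, |deriv f t| ≤ L) (hc0 : 0 ≤ c)
    (hc : ∀ t ∈ Set.Icc (0 : ℝ) 1, c ≤ f'' t) :
    c / (√12 * L) * (N : ℝ) ^ (-(1 / 2 : ℝ)) ≤
      score1 (intF1 f - quadQ1 bmK (eqPts N) f) (RBC1 bmK f (eqPts N)) := by
  have hpos : 0 < √12 * (N * sigmaML1 bmK f (eqPts N)) :=
    mul_pos (by positivity) ((mul_pos (abs_pos.2 hf1)
      (Real.sqrt_pos.2 (Nat.cast_pos.2 hN))).trans_le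
        (abs_mul_sqrt_le_natCast_mul_sigmaML1_eqPts hN hf0))
  calc _ = c / (√12 * (L * √N)) := by rw [rpow_neg_one_half_eq_inv_sqrt (Nat.cast_nonneg _)]; ring
    _ ≤ c / (√12 * (N * sigmaML1 bmK f (eqPts N))) := div_le_div_of_nonneg_left hc0 hpos
        (mul_le_mul_of_nonneg_left (natCast_mul_sigmaML1_eqPts_le hN hf0 hf hL)
          (Real.sqrt_nonneg _))
    _ ≤ _ := by
        rw [← mul_assoc]
        exact le_score1_eqPts hN hf0 hf1 (fun t ht => (hf t ht).hasDerivAt) hf' hf'' hc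

end Uniform

/-- For the Brownian motion kernel `K(s,t) = min{s,t}` on `[0,1]`,
weight `w ≡ 1`, and the equispaced points `X_N = {1/N, …, 1}`: if `f` is twice
differentiable on `[0,1]` with bounded second derivative, `f(0) = 0` and `f(1) ≠ 0`,
then the Bayesian quadrature standard score satisfies
`|I(f) − Q_{X_N}(f)| / R_BC(f,X_N) ≤ sup_{t∈[0,1]} |f''(t)| / (√12 · N · σ_ML(f,X_N))`
and this is `≲ N^{−1/2}`; if moreover `f'' > c > 0` on `[0,1]`, then the standard score
is also `≳ N^{−1/2}`. -/
theorem brownian_trapezoidal_score (f : ℝ → ℝ) (hf0 : f 0 = 0) (hf1 : f 1 ≠ 0)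
    (hd1 : ∀ t ∈ Set.Icc (0 : ℝ) 1, DifferentiableAt ℝ f t)
    (hd2 : ∀ t ∈ Set.Icc (0 : ℝ) 1, DifferentiableAt ℝ (deriv f) t)
    (hbdd : ∃ M : ℝ, ∀ t ∈ Set.Icc (0 : ℝ) 1, |deriv (deriv f) t| ≤ M) :
    (∀ N : ℕ, 0 < N →
      score1 (intF1 f - quadQ1 bmK (eqPts N) f) (RBC1 bmK f (eqPts N)) ≤
        (⨆ t : Set.Icc (0 : ℝ) 1, |deriv (deriv f) (t : ℝ)|) /
          (Real.sqrt 12 * N * sigmaML1 bmK f (eqPts N))) ∧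
    (∃ C : ℝ, 0 < C ∧ ∀ᶠ N : ℕ in atTop,
      score1 (intF1 f - quadQ1 bmK (eqPts N) f) (RBC1 bmK f (eqPts N)) ≤
        C * (N : ℝ) ^ (-(1 / 2 : ℝ))) ∧
    (∀ c : ℝ, 0 < c → (∀ t ∈ Set.Icc (0 : ℝ) 1, c < deriv (deriv f) t) →
      ∃ c' : ℝ, 0 < c' ∧ ∀ᶠ N : ℕ in atTop,
        c' * (N : ℝ) ^ (-(1 / 2 : ℝ)) ≤
          score1 (intF1 f - quadQ1 bmK (eqPts N) f) (RBC1 bmK f (eqPts N))) := by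
  have hf := fun t ht => (hd1 t ht).hasDerivAt
  have hf' := fun t ht => (hd2 t ht).hasDerivAt
  obtain ⟨M₀, hM₀⟩ := hbdd
  have hf'' : IntegrableOn (deriv (deriv f)) (Set.Icc 0 1) :=
    Measure.integrableOn_of_bounded measure_Icc_lt_top.ne (measurable_deriv _).aestronglyMeasurable
      ((ae_restrict_iff' measurableSet_Icc).2 (ae_of_all _ hM₀))
  set M := ⨆ t : Set.Icc (0 : ℝ) 1, |deriv (deriv f) (t : ℝ)|
  have hM : ∀ t ∈ Set.Icc (0 : ℝ) 1, |deriv (deriv f) t| ≤ M := fun t ht =>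
    le_ciSup (f := fun t : Set.Icc (0 : ℝ) 1 => |deriv (deriv f) t|)
      ⟨M₀, by rintro _ ⟨t, rfl⟩; exact hM₀ t t.2⟩ ⟨t, ht⟩
  have hM1 : 0 < M + 1 := by linarith [(abs_nonneg _).trans (hM 0 ⟨le_rfl, zero_le_one⟩)]
  obtain ⟨L, hL⟩ := isCompact_Icc.exists_bound_of_continuousOn fun t ht =>
    (hd2 t ht).continuousAt.continuousWithinAt
  refine ⟨fun N hN => score1_eqPts_le hN hf0 hf1 hf hf' hf'' hM,
    ⟨(M + 1) / (√12 * |f 1|), div_pos hM1 (mul_pos (by positivity) (abs_pos.2 hf1)),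
      eventually_atTop.2 ⟨1, fun N hN => score1_eqPts_le_rpow hN hf0 hf1 hf hf' hf'' fun t ht =>
        (hM t ht).trans (lt_add_one M).le⟩⟩,
    fun c hc hcf => ⟨c / (√12 * (|L| + 1)), by positivity,
      eventually_atTop.2 ⟨1, fun N hN => le_score1_eqPts_rpow hN hf0 hf1 hd1 hf' hf''
        (fun t ht => (hL t ht).trans ((le_abs_self L).trans (lt_add_one _).le)) hc.le
        fun t ht => (hcf t ht).le⟩⟩⟩
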